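/- For all permutations σ and τ of {1,…,k}, the Hamming distance between L_1 = mdolBWT(M,σ) and L_2 = mdolBWT(M,τ) satisfies Hdist(L_1,L_2) ≤ Σ_{[b,e] interesting interval of M} (e − b + 1), i.e., it is bounded by the total length of the interesting intervals of M. -/

import Mathlib

/-- The `j`-th rotation of a string. -/
def rot {β : Type*} (l : List β) (j : ℕ) : List β := l.drop j ++ l.take j

/-- Nonstrict lexicographic order on strings. -/
def listLe {β : Type*} [LT β] (X Y : List β) : Prop := X = Y ∨ List.Lex (· < ·) X Y

/-- `T·$`, over the alphabet extended with a sentinel `⊥` smaller than every symbol. -/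
def dstr {α : Type*} (T : List α) : List (WithBot α) :=
  (T.map (fun a => (a : WithBot α))) ++ [⊥]

/-- The multiset (list) of all rotations of the strings `T_i·$`. -/
def dolRots {α : Type*} {k : ℕ} (T : Fin k → List α) : List (List (WithBot α)) :=
  (List.finRange k).flatMap fun i =>
    (List.range (dstr (T i)).length).map (rot (dstr (T i)))

/-- The character preceding the suffix `U` in `Ti`: the last character of `W` where
`Ti = W·U`, and the sentinel `⊥` (i.e. `$`) if `U = Ti`. -/
def precChar {α : Type*} (Ti U : List α) : WithBot α :=
  match (Ti.take (Ti.length - U.length)).getLast? with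
  | none => ⊥
  | some a => (a : WithBot α)

/-- `U` defines an interesting interval: `U` is a suffix of two different input strings
and the characters preceding these two occurrences differ. -/
def Interesting {α : Type*} {k : ℕ} (T : Fin k → List α) (U : List α) : Prop :=
  ∃ i j : Fin k, i ≠ j ∧ U <:+ T i ∧ U <:+ T j ∧ precChar (T i) U ≠ precChar (T j) U

/-- The set of ranks, in the lexicographically sorted list `L0` of rotations of the
`T_i·$`, of the rotations beginning with `U·$`. -/
def rankSet {α : Type*} (L0 : List (List (WithBot α))) (U : List α) : Set ℕ :=
  {p | ∃ R, L0[p]? = some R ∧ dstr U <+: R}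

/-- The string `W_σ = T_{σ(1)}$_1 T_{σ(2)}$_2 ⋯ T_{σ(k)}$_k` over the alphabet
`Fin k ⊕ₗ α` (separators `toLex (Sum.inl p)` are pairwise distinct, increasing, and
smaller than every symbol of `Σ`). -/
def mWord {α : Type*} {k : ℕ} (T : Fin k → List α) (σ : Equiv.Perm (Fin k)) :
    List (Fin k ⊕ₗ α) :=
  (List.finRange k).flatMap fun p =>
    ((T (σ p)).map fun a => toLex (Sum.inr a)) ++ [toLex (Sum.inl p)]

/-- The multiset (list) of all rotations of `W_σ`. -/
def mRots {α : Type*} {k : ℕ} (T : Fin k → List α) (σ : Equiv.Perm (Fin k)) :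
    List (List (Fin k ⊕ₗ α)) :=
  (List.range (mWord T σ).length).map (rot (mWord T σ))

/-- The last character of a rotation, with every separator replaced by the single
sentinel `$` (here `⊥`). -/
def lastOut {α : Type*} {k : ℕ} (R : List (Fin k ⊕ₗ α)) : WithBot α :=
  match R.getLast? with
  | none => ⊥
  | some b => match ofLex b with
    | Sum.inl _ => ⊥
    | Sum.inr a => (a : WithBot α)

/-- The multidollar BWT read off from a lexicographically sorted list `L` of the
rotations of `W_σ`. -/
def mdolOf {α : Type*} {k : ℕ} (L : List (List (Fin k ⊕ₗ α))) : List (WithBot α) :=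
  L.map lastOut

/-- The Hamming distance of two strings of equal length: the number of positions at
which they differ. -/
def hdist {γ : Type*} [DecidableEq γ] (X Y : List γ) : ℕ :=
  ((Finset.range X.length).filter fun p => X[p]? ≠ Y[p]?).card

/-!
Cutting a rotation just after its first separator (every separator read as `$`) is monotone for
the lexicographic order. It sends the rotations of `W_σ` to the strings `U·$` with `U` a suffix
of some `T_i`, with the same multiplicities as for the rotations of the `T_i·$`. Sorted lists
with the same elements coincide, so the rotations of rank `r` of `W_σ`, of `W_τ` and of the
`T_i·$` all begin with the same `U·$`, and the BWT characters at rank `r` are the characters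
preceding `U` in the strings `T_i`, `T_j` from which the two rotations of `W_σ` and `W_τ` come.
If they differ, then `i ≠ j`, so `U` is interesting and `r` lies in its interval.
-/

open List

section SentinelPrefix

variable {α β : Type*}

def sentinelPrefix [DecidableEq α] (f : β → WithBot α) : List β → List (WithBot α)
  | [] => [⊥]
  | x :: R => if f x = ⊥ then [⊥] else f x :: sentinelPrefix f R

theorem sentinelPrefix_append_cons [DecidableEq α] (f : β → WithBot α) {X : List β} {y : β}
    (hX : ∀ x ∈ X, f x ≠ ⊥) (hy : f y = ⊥) (Z : List β) :
    sentinelPrefix f (X ++ y :: Z) = X.map f ++ [⊥] := by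
  induction X with
  | nil => simp [sentinelPrefix, hy]
  | cons x X ih =>
    simp [sentinelPrefix, hX x mem_cons_self, ih fun x hx => hX x (mem_cons_of_mem _ hx)]

variable [PartialOrder α] [DecidableEq α] {f : β → WithBot α}

theorem listLe_bot_sentinelPrefix (R : List β) : listLe [⊥] (sentinelPrefix f R) := by
  cases R with
  | nil => exact Or.inl rfl
  | cons x R =>
    by_cases hx : f x = ⊥
    · simp only [sentinelPrefix, if_pos hx]; exact Or.inl rfl
    · simp only [sentinelPrefix, if_neg hx]; exact Or.inr (Lex.rel (bot_lt_iff_ne_bot.2 hx))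

theorem listLe_sentinelPrefix [LT β] (hf : ∀ x y, x < y → f x = ⊥ ∨ f x < f y) {R R' : List β}
    (h : listLe R R') : listLe (sentinelPrefix f R) (sentinelPrefix f R') := by
  rcases h with rfl | h
  · exact Or.inl rfl
  induction h with
  | nil => exact listLe_bot_sentinelPrefix _
  | @rel a _ b l hab =>
    by_cases ha : f a = ⊥
    · simp only [sentinelPrefix, if_pos ha]; exact listLe_bot_sentinelPrefix (b :: l)
    · have hlt := (hf a b hab).resolve_left ha
      have hb : f b ≠ ⊥ := (lt_of_le_of_lt bot_le hlt).ne'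
      simp only [sentinelPrefix, if_neg ha, if_neg hb]
      exact Or.inr (Lex.rel hlt)
  | @cons a _ _ _ ih =>
    by_cases ha : f a = ⊥
    · simp only [sentinelPrefix, if_pos ha]; exact Or.inl rfl
    · simp only [sentinelPrefix, if_neg ha]
      rcases ih with heq | hlt
      · exact Or.inl (heq ▸ rfl)
      · exact Or.inr (Lex.cons hlt)

end SentinelPrefix

theorem listLe_antisymm {β : Type*} [Preorder β] {X Y : List β}
    (h₁ : listLe X Y) (h₂ : listLe Y X) : X = Y := by
  rcases h₁ with rfl | h₁
  · rfl
  rcases h₂ with rfl | h₂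
  · rfl
  exact absurd h₂ (asymm h₁)

section DollarStrings

variable {α : Type*}

theorem dstr_eq_map_append (U : List α) : dstr U = U.map WithBot.some ++ [⊥] := by
  simp [dstr, map_eq_flatMap]

theorem dstr_injective : Function.Injective (dstr (α := α)) := fun U V h => by
  rw [dstr_eq_map_append, dstr_eq_map_append, append_left_inj] at h
  exact map_injective_iff.2 (fun _ _ => WithBot.coe_inj.1) h

theorem sentinelPrefix_id_dstr_append [DecidableEq α] (U : List α) (Z : List (WithBot α)) :
    sentinelPrefix id (dstr U ++ Z) = dstr U := by
  rw [dstr_eq_map_append, append_assoc, singleton_append,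
    sentinelPrefix_append_cons id (by simp) rfl, map_id]

theorem rot_dstr {Ti : List α} {j : ℕ} (hj : j ≤ Ti.length) :
    rot (dstr Ti) j = dstr (Ti.drop j) ++ (Ti.take j).map WithBot.some := by
  rw [rot, dstr_eq_map_append, dstr_eq_map_append,
    drop_append_of_le_length (by simpa using hj), take_append_of_le_length (by simpa using hj),
    map_drop, map_take]

def dollarSuffixes {k : ℕ} (T : Fin k → List α) : List (List (WithBot α)) :=
  (finRange k).flatMap fun i => (range ((T i).length + 1)).map fun j => dstr ((T i).drop j)

variable [DecidableEq α] {k : ℕ} (T : Fin k → List α)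

theorem map_sentinelPrefix_dolRots : (dolRots T).map (sentinelPrefix id) = dollarSuffixes T := by
  rw [dolRots, map_flatMap, dollarSuffixes]
  refine congrArg (fun g => (finRange k).flatMap g) (funext fun i => ?_)
  rw [map_map, dstr_eq_map_append, length_append, length_map, length_singleton]
  refine map_congr_left fun j hj => ?_
  rw [Function.comp_apply, ← dstr_eq_map_append, rot_dstr (by simpa [Nat.lt_succ_iff] using hj),
    sentinelPrefix_id_dstr_append]

theorem sentinelPrefix_prefix_of_mem_dolRots {R : List (WithBot α)} (h : R ∈ dolRots T) :
    sentinelPrefix id R <+: R := by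
  simp only [dolRots, mem_flatMap, mem_map, mem_range] at h
  obtain ⟨i, -, j, hj, rfl⟩ := h
  rw [rot_dstr (by simpa [dstr_eq_map_append, Nat.lt_succ_iff] using hj),
    sentinelPrefix_id_dstr_append]
  exact prefix_append _ _

end DollarStrings

section Separators

variable {ι α : Type*}

def toBot (x : ι ⊕ₗ α) : WithBot α :=
  match ofLex x with
  | Sum.inl _ => ⊥
  | Sum.inr a => a

@[simp] theorem toBot_inl (i : ι) : toBot (α := α) (toLex (Sum.inl i)) = ⊥ := rfl

@[simp] theorem toBot_inr (a : α) : toBot (ι := ι) (toLex (Sum.inr a)) = a := rfl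

theorem toBot_eq_bot_or_lt [LT ι] [LT α] :
    ∀ x y : ι ⊕ₗ α, x < y → toBot x = ⊥ ∨ toBot x < toBot y
  | Sum.inl _, _, _ => Or.inl rfl
  | Sum.inr _, Sum.inl _, h => absurd h Sum.Lex.not_inr_lt_inl
  | Sum.inr _, Sum.inr _, h => Or.inr (WithBot.coe_lt_coe.2 (Sum.Lex.inr_lt_inr_iff.1 h))

theorem sentinelPrefix_toBot [DecidableEq α] (U : List α) (i : ι) (Z : List (ι ⊕ₗ α)) :
    sentinelPrefix toBot (U.map (fun a => toLex (Sum.inr a)) ++ toLex (Sum.inl i) :: Z) =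
      dstr U := by
  rw [sentinelPrefix_append_cons toBot (by simp) rfl, map_map, dstr_eq_map_append]
  rfl

end Separators

section LastOut

variable {α : Type*} {k : ℕ}

theorem lastOut_append {S : List (Fin k ⊕ₗ α)} (hS : lastOut S = ⊥) (C : List (Fin k ⊕ₗ α)) :
    lastOut (S ++ C) = lastOut C := by
  rcases eq_or_ne C [] with rfl | hC
  · rw [append_nil, hS]; rfl
  · simp only [lastOut, getLast?_append_of_ne_nil _ hC]

theorem lastOut_flatten {Bs : List (List (Fin k ⊕ₗ α))} (h : ∀ B ∈ Bs, lastOut B = ⊥) :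
    lastOut Bs.flatten = ⊥ := by
  induction Bs with
  | nil => rfl
  | cons B Bs ih =>
    rw [flatten_cons, lastOut_append (h B mem_cons_self)]
    exact ih fun B hB => h B (mem_cons_of_mem _ hB)

theorem lastOut_append_inl (X : List (Fin k ⊕ₗ α)) (p : Fin k) :
    lastOut (X ++ [toLex (Sum.inl p)]) = ⊥ := by
  simp [lastOut]

theorem lastOut_map_take_eq_precChar {Ti : List α} {j : ℕ} (hj : j ≤ Ti.length) :
    lastOut ((Ti.take j).map fun a => (toLex (Sum.inr a) : Fin k ⊕ₗ α)) =
      precChar Ti (Ti.drop j) := by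
  have : Ti.length - (Ti.drop j).length = j := by rw [length_drop]; omega
  rw [precChar, this, lastOut, getLast?_map]
  cases (Ti.take j).getLast? <;> rfl

end LastOut

section Flatten

variable {γ : Type*}

theorem range_length_flatten (Bs : List (List γ)) :
    range Bs.flatten.length = (range Bs.length).flatMap fun p =>
      (range (Bs.getD p []).length).map ((Bs.take p).flatten.length + ·) := by
  induction Bs with
  | nil => rfl
  | cons B Bs ih =>
    rw [flatten_cons, length_append, range_add, ih, length_cons, range_succ_eq_map,
      flatMap_cons, map_flatMap, flatMap_map]
    simp [Function.comp_def, Nat.add_assoc]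

theorem rot_flatten {Bs : List (List γ)} {p : ℕ} (hp : p < Bs.length) {j : ℕ}
    (hj : j ≤ Bs[p].length) :
    rot Bs.flatten ((Bs.take p).flatten.length + j) =
      (Bs[p].drop j :: (Bs.drop (p + 1) ++ Bs.take p)).flatten ++ Bs[p].take j := by
  have hsplit : Bs.flatten = (Bs.take p).flatten ++ (Bs[p] ++ (Bs.drop (p + 1)).flatten) := by
    conv_lhs => rw [← take_append_drop p Bs, drop_eq_getElem_cons hp]
    rw [flatten_append, flatten_cons]
  rw [rot, hsplit, drop_length_add_append, take_length_add_append,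
    drop_append_of_le_length hj, take_append_of_le_length hj]
  simp

end Flatten

section RotationsOfMWord

variable {α : Type*} {k : ℕ} (T : Fin k → List α) (σ : Equiv.Perm (Fin k))

def sepBlocks : List (List (Fin k ⊕ₗ α)) :=
  (finRange k).map fun p => ((T (σ p)).map fun a => toLex (Sum.inr a)) ++ [toLex (Sum.inl p)]

def blockStart (p : Fin k) : ℕ := ((sepBlocks T σ).take p).flatten.length

@[simp] theorem length_sepBlocks : (sepBlocks T σ).length = k := by simp [sepBlocks]

theorem mWord_eq_flatten : mWord T σ = (sepBlocks T σ).flatten := flatMap_def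

theorem getElem_sepBlocks (p : Fin k) :
    (sepBlocks T σ)[p.val]'(by simp [sepBlocks]) =
      ((T (σ p)).map fun a => toLex (Sum.inr a)) ++ [toLex (Sum.inl p)] := by
  simp [sepBlocks]

theorem mRots_eq : mRots T σ = (finRange k).flatMap fun p =>
    (range ((T (σ p)).length + 1)).map fun j => rot (mWord T σ) (blockStart T σ p + j) := by
  rw [mRots, mWord_eq_flatten, range_length_flatten, map_flatMap,
    length_sepBlocks, ← map_coe_finRange_eq_range, flatMap_map]
  refine congrArg (fun g => (finRange k).flatMap g) (funext fun p => ?_)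
  rw [getD_eq_getElem _ _ (by simp [sepBlocks]), getElem_sepBlocks, map_map]
  simp [blockStart, Function.comp_def]

theorem rot_mWord {p : Fin k} {j : ℕ} (hj : j ≤ (T (σ p)).length) :
    rot (mWord T σ) (blockStart T σ p + j) =
      ((T (σ p)).drop j).map (fun a => toLex (Sum.inr a)) ++ toLex (Sum.inl p) ::
        ((sepBlocks T σ).drop (p + 1) ++ (sepBlocks T σ).take p).flatten ++
          ((T (σ p)).take j).map fun a => toLex (Sum.inr a) := by
  rw [mWord_eq_flatten, blockStart, rot_flatten (by simp [sepBlocks]) (by simp [sepBlocks]; omega),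
    getElem_sepBlocks, drop_append_of_le_length (by simpa using hj),
    take_append_of_le_length (by simpa using hj), flatten_cons, map_drop, map_take]
  simp

theorem sentinelPrefix_rot_mWord [DecidableEq α] {p : Fin k} {j : ℕ}
    (hj : j ≤ (T (σ p)).length) :
    sentinelPrefix toBot (rot (mWord T σ) (blockStart T σ p + j)) = dstr ((T (σ p)).drop j) := by
  rw [rot_mWord T σ hj, append_assoc, cons_append, sentinelPrefix_toBot]

theorem lastOut_rot_mWord {p : Fin k} {j : ℕ} (hj : j ≤ (T (σ p)).length) :
    lastOut (rot (mWord T σ) (blockStart T σ p + j)) =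
      precChar (T (σ p)) ((T (σ p)).drop j) := by
  have hblocks : ∀ B ∈ sepBlocks T σ, lastOut B = ⊥ := by
    simp only [sepBlocks, mem_map]
    rintro _ ⟨q, -, rfl⟩
    exact lastOut_append_inl _ q
  rw [rot_mWord T σ hj, ← singleton_append, ← append_assoc (map _ _) [_],
    append_assoc (map _ _ ++ [_]),
    lastOut_append (lastOut_append_inl _ p),
    lastOut_append (lastOut_flatten fun B hB => hblocks B ((mem_append.1 hB).elim
      mem_of_mem_drop mem_of_mem_take)),
    lastOut_map_take_eq_precChar hj]

end RotationsOfMWord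

section SortedRotations

variable {α : Type*} {k : ℕ} (T : Fin k → List α)

theorem map_sentinelPrefix_mRots_perm [DecidableEq α] (σ : Equiv.Perm (Fin k)) :
    ((mRots T σ).map (sentinelPrefix toBot)).Perm (dollarSuffixes T) := by
  have hcut : (mRots T σ).map (sentinelPrefix toBot) = ((finRange k).map σ).flatMap fun i =>
      (range ((T i).length + 1)).map fun j => dstr ((T i).drop j) := by
    rw [mRots_eq, map_flatMap, flatMap_map]
    refine congrArg (fun g => (finRange k).flatMap g) (funext fun p => ?_)
    rw [map_map]
    exact map_congr_left fun j hj =>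
      sentinelPrefix_rot_mWord T σ (Nat.lt_succ_iff.1 (mem_range.1 hj))
  rw [hcut, dollarSuffixes]
  exact (σ.map_finRange_perm).flatMap_right _

theorem exists_of_mem_mRots [DecidableEq α] {σ : Equiv.Perm (Fin k)} {R : List (Fin k ⊕ₗ α)}
    (h : R ∈ mRots T σ) : ∃ i U, U <:+ T i ∧ sentinelPrefix toBot R = dstr U ∧
      lastOut R = precChar (T i) U := by
  simp only [mRots_eq, mem_flatMap, mem_map, mem_range] at h
  obtain ⟨p, -, j, hj, rfl⟩ := h
  exact ⟨σ p, _, drop_suffix j _, sentinelPrefix_rot_mWord T σ (by omega),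
    lastOut_rot_mWord T σ (by omega)⟩

theorem map_sentinelPrefix_eq_of_sorted [LinearOrder α] {σ : Equiv.Perm (Fin k)}
    {L0 : List (List (WithBot α))} (hperm0 : L0.Perm (dolRots T)) (hsort0 : L0.Pairwise listLe)
    {L : List (List (Fin k ⊕ₗ α))} (hperm : L.Perm (mRots T σ)) (hsort : L.Pairwise listLe) :
    L.map (sentinelPrefix toBot) = L0.map (sentinelPrefix id) := by
  refine Perm.eq_of_pairwise (fun _ _ _ _ => listLe_antisymm)
    (hsort.map _ fun _ _ => listLe_sentinelPrefix toBot_eq_bot_or_lt)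
    (hsort0.map _ fun _ _ => listLe_sentinelPrefix fun _ _ h => Or.inr h) ?_
  calc L.map (sentinelPrefix toBot) ~ (mRots T σ).map (sentinelPrefix toBot) := hperm.map _
    _ ~ dollarSuffixes T := map_sentinelPrefix_mRots_perm T σ
    _ = (dolRots T).map (sentinelPrefix id) := (map_sentinelPrefix_dolRots T).symm
    _ ~ L0.map (sentinelPrefix id) := (hperm0.map _).symm

end SortedRotations

theorem exists_interesting_of_mdolOf_ne {α : Type*} [LinearOrder α] {k : ℕ}
    (T : Fin k → List α) {σ τ : Equiv.Perm (Fin k)}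
    {L0 : List (List (WithBot α))} (hperm0 : L0.Perm (dolRots T)) (hsort0 : L0.Pairwise listLe)
    {L1 L2 : List (List (Fin k ⊕ₗ α))}
    (hperm1 : L1.Perm (mRots T σ)) (hsort1 : L1.Pairwise listLe)
    (hperm2 : L2.Perm (mRots T τ)) (hsort2 : L2.Pairwise listLe)
    {r : ℕ} (hne : (mdolOf L1)[r]? ≠ (mdolOf L2)[r]?) :
    ∃ U, Interesting T U ∧ r ∈ rankSet L0 U := by
  have e1 := map_sentinelPrefix_eq_of_sorted T hperm0 hsort0 hperm1 hsort1
  have e2 := map_sentinelPrefix_eq_of_sorted T hperm0 hsort0 hperm2 hsort2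
  have hlen1 : L1.length = L0.length := by simpa using congrArg length e1
  have hlen2 : L2.length = L0.length := by simpa using congrArg length e2
  have hr : r < L0.length := by
    by_contra hr
    exact hne (by rw [getElem?_eq_none, getElem?_eq_none] <;> simp [mdolOf] <;> omega)
  have hr1 : r < L1.length := hlen1 ▸ hr
  have hr2 : r < L2.length := hlen2 ▸ hr
  have c1 := congrArg (·[r]?) e1
  have c2 := congrArg (·[r]?) e2
  simp only [getElem?_map, getElem?_eq_getElem hr, getElem?_eq_getElem hr1,
    getElem?_eq_getElem hr2, Option.map_some, Option.some.injEq] at c1 c2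
  have hlast : lastOut L1[r] ≠ lastOut L2[r] := by
    simpa [mdolOf, getElem?_eq_getElem hr1, getElem?_eq_getElem hr2] using hne
  obtain ⟨i, U, hUi, hcut1, hlast1⟩ := exists_of_mem_mRots T (hperm1.subset (getElem_mem hr1))
  obtain ⟨j, U', hUj, hcut2, hlast2⟩ := exists_of_mem_mRots T (hperm2.subset (getElem_mem hr2))
  obtain rfl : U = U' := dstr_injective (by rw [← hcut1, ← hcut2, c1, c2])
  refine ⟨U, ⟨i, j, ?_, hUi, hUj, hlast1 ▸ hlast2 ▸ hlast⟩, L0[r], getElem?_eq_getElem hr, ?_⟩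
  · rintro rfl
    exact hlast (hlast1.trans hlast2.symm)
  · rw [← hcut1, c1]
    exact sentinelPrefix_prefix_of_mem_dolRots T (hperm0.subset (getElem_mem hr))

theorem mdolBWT_hamming_le_interesting_length_general {α : Type*} [LinearOrder α]
    (k : ℕ) (T : Fin k → List α)
    (σ τ : Equiv.Perm (Fin k))
    (L0 : List (List (WithBot α))) (hperm0 : L0.Perm (dolRots T))
    (hsort0 : L0.Pairwise listLe)
    (L1 L2 : List (List (Fin k ⊕ₗ α)))
    (hperm1 : L1.Perm (mRots T σ)) (hsort1 : L1.Pairwise listLe)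
    (hperm2 : L2.Perm (mRots T τ)) (hsort2 : L2.Pairwise listLe)
    (𝒰 : Finset (List α)) (h𝒰 : ∀ U, U ∈ 𝒰 ↔ Interesting T U)
    (b e : List α → ℕ)
    (hb : ∀ U ∈ 𝒰, IsLeast (rankSet L0 U) (b U))
    (he : ∀ U ∈ 𝒰, IsGreatest (rankSet L0 U) (e U)) :
    hdist (mdolOf L1) (mdolOf L2) ≤ ∑ U ∈ 𝒰, (e U - b U + 1) := by
  have hcover :
      (Finset.range (mdolOf L1).length).filter (fun r => (mdolOf L1)[r]? ≠ (mdolOf L2)[r]?) ⊆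
        𝒰.biUnion fun U => Finset.Icc (b U) (e U) := by
    intro r hr
    obtain ⟨U, hU, hrU⟩ := exists_interesting_of_mdolOf_ne T hperm0 hsort0 hperm1 hsort1
      hperm2 hsort2 (Finset.mem_filter.1 hr).2
    rw [← h𝒰] at hU
    exact Finset.mem_biUnion.2 ⟨U, hU, Finset.mem_Icc.2 ⟨(hb U hU).2 hrU, (he U hU).2 hrU⟩⟩
  calc hdist (mdolOf L1) (mdolOf L2)
      ≤ (𝒰.biUnion fun U => Finset.Icc (b U) (e U)).card := Finset.card_le_card hcover
    _ ≤ ∑ U ∈ 𝒰, (Finset.Icc (b U) (e U)).card := Finset.card_biUnion_le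
    _ ≤ ∑ U ∈ 𝒰, (e U - b U + 1) := Finset.sum_le_sum fun U _ => by rw [Nat.card_Icc]; omega

/-- The Hamming distance between `mdolBWT(M,σ)` and `mdolBWT(M,τ)` is at
most the total length `Σ (e − b + 1)` of the interesting intervals of `M`.  Here `𝒰`
is the (finite) set of shared suffixes defining interesting intervals, and for each of
them `b U`, `e U` are the least resp. greatest ranks of rotations beginning with
`U·$` in the sorted rotation list `L0` of the `T_i·$`. -/
theorem mdolBWT_hamming_le_interesting_length {α : Type*} [LinearOrder α]
    (k : ℕ) (hk : 2 ≤ k) (T : Fin k → List α) (hT : ∀ i, T i ≠ [])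
    (σ τ : Equiv.Perm (Fin k))
    (L0 : List (List (WithBot α))) (hperm0 : L0.Perm (dolRots T))
    (hsort0 : L0.Pairwise listLe)
    (L1 L2 : List (List (Fin k ⊕ₗ α)))
    (hperm1 : L1.Perm (mRots T σ)) (hsort1 : L1.Pairwise listLe)
    (hperm2 : L2.Perm (mRots T τ)) (hsort2 : L2.Pairwise listLe)
    (𝒰 : Finset (List α)) (h𝒰 : ∀ U, U ∈ 𝒰 ↔ Interesting T U)
    (b e : List α → ℕ)
    (hb : ∀ U ∈ 𝒰, IsLeast (rankSet L0 U) (b U))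
    (he : ∀ U ∈ 𝒰, IsGreatest (rankSet L0 U) (e U)) :
    hdist (mdolOf L1) (mdolOf L2) ≤ ∑ U ∈ 𝒰, (e U - b U + 1) :=
  mdolBWT_hamming_le_interesting_length_general k T σ τ L0 hperm0 hsort0 L1 L2 hperm1 hsort1 hperm2
    hsort2 𝒰 h𝒰 b e hb he
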